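/- arXiv:1405.7668 — 4 statements merged into one kernel-verified Lean document; each statement's English description precedes it below -/
import Mathlib

section
/- The permutation matrix U_{2^⊗3}((1 2 3)), the 8×8 matrix sending a ⊗ b ⊗ c to c ⊗ a ⊗ b for all a,b,c ∈ ℂ², equals (1/4)I₂⊗I₂⊗I₂ + (1/4)Σ_l I₂⊗σ_l⊗σ_l + (1/4)Σ_l σ_l⊗I₂⊗σ_l + (1/4)Σ_l σ_l⊗σ_l⊗I₂ − (i/4)Σ_{i,j,k} ε_{ijk} σ_i⊗σ_j⊗σ_k. -/
open Matrix Kronecker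

/-- The Pauli matrices σ₁, σ₂, σ₃. -/
noncomputable def pauli : Fin 3 → Matrix (Fin 2) (Fin 2) ℂ :=
  ![!![0, 1; 1, 0], !![0, -Complex.I; Complex.I, 0], !![1, 0; 0, -1]]

/-- The Levi-Civita symbol on three indices, with ε₁₂₃ = 1. -/
def levicivita : Fin 3 → Fin 3 → Fin 3 → ℂ := fun i j k =>
  if (i,j,k) = (0,1,2) ∨ (i,j,k) = (1,2,0) ∨ (i,j,k) = (2,0,1) then 1
  else if (i,j,k) = (2,1,0) ∨ (i,j,k) = (1,0,2) ∨ (i,j,k) = (0,2,1) then -1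
  else 0

/-!
The cyclic permutation of the three tensor factors is the product of the transpositions of
factors 1,2 and 2,3, and on ℂ² ⊗ ℂ² the transposition is `½ (I ⊗ I + ∑ₗ σₗ ⊗ σₗ)`.
Multiplying out the two expansions and reducing `σₗ σₘ = δₗₘ I + i ∑ₖ εₗₘₖ σₖ` gives the formula.
-/

namespace Matrix

variable {ι l m n p q r R : Type*}

theorem sum_kronecker [NonUnitalNonAssocSemiring R] (s : Finset ι) (A : ι → Matrix l m R)
    (B : Matrix n p R) : (∑ i ∈ s, A i) ⊗ₖ B = ∑ i ∈ s, A i ⊗ₖ B := by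
  ext
  simp [Matrix.sum_apply, Finset.sum_mul]

theorem kronecker_sum [NonUnitalNonAssocSemiring R] (s : Finset ι) (A : Matrix l m R)
    (B : ι → Matrix n p R) : A ⊗ₖ (∑ i ∈ s, B i) = ∑ i ∈ s, A ⊗ₖ B i := by
  ext
  simp [Matrix.sum_apply, Finset.mul_sum]

theorem kronecker_kronecker_eq_submatrix [Semigroup R] (A : Matrix l m R) (B : Matrix n p R)
    (C : Matrix q r R) :
    A ⊗ₖ B ⊗ₖ C =
      (A ⊗ₖ (B ⊗ₖ C)).submatrix (Equiv.prodAssoc _ _ _) (Equiv.prodAssoc _ _ _) := by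
  rw [← kronecker_assoc', submatrix_submatrix]
  simp

theorem ext_of_mul_kronecker_kronecker [Fintype l] [Fintype m] [Fintype n] [DecidableEq l]
    [DecidableEq m] [DecidableEq n] [NonAssocSemiring R] {U V : Matrix p ((l × m) × n) R}
    (h : ∀ (a : Matrix l (Fin 1) R) (b : Matrix m (Fin 1) R) (c : Matrix n (Fin 1) R),
      U * (a ⊗ₖ b ⊗ₖ c) = V * (a ⊗ₖ b ⊗ₖ c)) : U = V := by
  ext i ⟨⟨x, y⟩, z⟩
  simpa [single_kronecker_single] using
    congrFun₂ (h (single x 0 1) (single y 0 1) (single z 0 1)) i ((0, 0), 0)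

end Matrix

theorem levicivita_swap_right (i j k : Fin 3) : levicivita i k j = -levicivita i j k := by
  fin_cases i <;> fin_cases j <;> fin_cases k <;> simp [levicivita]

theorem pauli_mul_pauli (i j : Fin 3) :
    pauli i * pauli j =
      (if i = j then (1 : ℂ) else 0) • 1 + Complex.I • ∑ k, levicivita i j k • pauli k := by
  fin_cases i <;> fin_cases j <;> ext a b <;> fin_cases a <;> fin_cases b <;>
    simp [pauli, levicivita]

theorem sum_pauli_kronecker_mul_kronecker_pauli :
    ∑ l, ∑ m, pauli l ⊗ₖ (pauli l * pauli m) ⊗ₖ pauli m =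
      ∑ l, pauli l ⊗ₖ 1 ⊗ₖ pauli l
        - Complex.I • ∑ i, ∑ j, ∑ k, levicivita i j k • (pauli i ⊗ₖ pauli j ⊗ₖ pauli k) := by
  have hε (i : Fin 3) : ∑ k, ∑ j, levicivita i k j • (pauli i ⊗ₖ pauli j ⊗ₖ pauli k) =
      -∑ j, ∑ k, levicivita i j k • (pauli i ⊗ₖ pauli j ⊗ₖ pauli k) := by
    rw [Finset.sum_comm]
    simp only [← Finset.sum_neg_distrib, ← neg_smul, ← levicivita_swap_right]
  simp only [pauli_mul_pauli, kronecker_add, add_kronecker, kronecker_smul, smul_kronecker,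
    kronecker_sum, sum_kronecker, Finset.sum_add_distrib, ← Finset.smul_sum, hε, smul_neg,
    Finset.sum_neg_distrib]
  simp only [ite_smul, one_smul, zero_smul, Finset.sum_ite_eq, Finset.mem_univ, if_true]
  abel

noncomputable def pauliSwap : Matrix (Fin 2 × Fin 2) (Fin 2 × Fin 2) ℂ :=
  (1 / 2 : ℂ) • (1 ⊗ₖ 1 + ∑ l, pauli l ⊗ₖ pauli l)

theorem pauliSwap_mul_kronecker (a b : Matrix (Fin 2) (Fin 1) ℂ) :
    pauliSwap * (a ⊗ₖ b) = b ⊗ₖ a := by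
  ext ⟨i, j⟩ ⟨u, v⟩
  fin_cases i <;> fin_cases j <;> fin_cases u <;> fin_cases v <;>
    simp [pauliSwap, pauli, mul_apply, Fintype.sum_prod_type, Fin.sum_univ_three, one_apply] <;>
    ring

noncomputable def pauliSwap₁₂ : Matrix ((Fin 2 × Fin 2) × Fin 2) ((Fin 2 × Fin 2) × Fin 2) ℂ :=
  pauliSwap ⊗ₖ 1

noncomputable def pauliSwap₂₃ : Matrix ((Fin 2 × Fin 2) × Fin 2) ((Fin 2 × Fin 2) × Fin 2) ℂ :=
  ((1 : Matrix (Fin 2) (Fin 2) ℂ) ⊗ₖ pauliSwap).submatrix (Equiv.prodAssoc _ _ _)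
    (Equiv.prodAssoc _ _ _)

theorem pauliSwap₁₂_mul_kronecker (a b c : Matrix (Fin 2) (Fin 1) ℂ) :
    pauliSwap₁₂ * (a ⊗ₖ b ⊗ₖ c) = b ⊗ₖ a ⊗ₖ c := by
  rw [pauliSwap₁₂, ← mul_kronecker_mul, pauliSwap_mul_kronecker, Matrix.one_mul]

theorem pauliSwap₂₃_mul_kronecker (a b c : Matrix (Fin 2) (Fin 1) ℂ) :
    pauliSwap₂₃ * (a ⊗ₖ b ⊗ₖ c) = a ⊗ₖ c ⊗ₖ b := by
  rw [pauliSwap₂₃, kronecker_kronecker_eq_submatrix a b, submatrix_mul_equiv,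
    ← mul_kronecker_mul, pauliSwap_mul_kronecker, Matrix.one_mul,
    ← kronecker_kronecker_eq_submatrix]

theorem pauliSwap₁₂_eq :
    pauliSwap₁₂ = (1 / 2 : ℂ) • (1 ⊗ₖ 1 ⊗ₖ 1 + ∑ l, pauli l ⊗ₖ pauli l ⊗ₖ 1) := by
  rw [pauliSwap₁₂, pauliSwap, smul_kronecker, add_kronecker, sum_kronecker]

theorem pauliSwap₂₃_eq :
    pauliSwap₂₃ = (1 / 2 : ℂ) • (1 ⊗ₖ 1 ⊗ₖ 1 + ∑ l, 1 ⊗ₖ pauli l ⊗ₖ pauli l) := by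
  conv_rhs => simp only [kronecker_kronecker_eq_submatrix]
  rw [pauliSwap₂₃, pauliSwap, kronecker_smul, kronecker_add, kronecker_sum, submatrix_smul,
    submatrix_add]
  ext
  simp [Matrix.sum_apply]

theorem pauliSwap₁₂_mul_pauliSwap₂₃ :
    pauliSwap₁₂ * pauliSwap₂₃ =
      (1 / 4 : ℂ) • (1 ⊗ₖ 1 ⊗ₖ 1 + ∑ l, 1 ⊗ₖ pauli l ⊗ₖ pauli l + ∑ l, pauli l ⊗ₖ pauli l ⊗ₖ 1
        + ∑ l, ∑ m, pauli l ⊗ₖ (pauli l * pauli m) ⊗ₖ pauli m) := by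
  rw [pauliSwap₁₂_eq, pauliSwap₂₃_eq, smul_mul_smul_comm]
  simp only [add_mul, mul_add, Finset.sum_mul_sum]
  simp only [Finset.sum_mul, Finset.mul_sum, ← mul_kronecker_mul, Matrix.one_mul, Matrix.mul_one]
  norm_num
  abel

theorem tensor_permutation_123_pauli
    (U : Matrix ((Fin 2 × Fin 2) × Fin 2) ((Fin 2 × Fin 2) × Fin 2) ℂ)
    (hU : ∀ a b c : Matrix (Fin 2) (Fin 1) ℂ,
      U * (a ⊗ₖ b ⊗ₖ c) = c ⊗ₖ a ⊗ₖ b) :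
    U = (1/4 : ℂ) • ((1 : Matrix (Fin 2) (Fin 2) ℂ) ⊗ₖ (1 : Matrix (Fin 2) (Fin 2) ℂ)
            ⊗ₖ (1 : Matrix (Fin 2) (Fin 2) ℂ))
      + (1/4 : ℂ) • ∑ l : Fin 3, (1 : Matrix (Fin 2) (Fin 2) ℂ) ⊗ₖ pauli l ⊗ₖ pauli l
      + (1/4 : ℂ) • ∑ l : Fin 3, pauli l ⊗ₖ (1 : Matrix (Fin 2) (Fin 2) ℂ) ⊗ₖ pauli l
      + (1/4 : ℂ) • ∑ l : Fin 3, pauli l ⊗ₖ pauli l ⊗ₖ (1 : Matrix (Fin 2) (Fin 2) ℂ)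
      - (Complex.I/4) • ∑ i : Fin 3, ∑ j : Fin 3, ∑ k : Fin 3,
          levicivita i j k • (pauli i ⊗ₖ pauli j ⊗ₖ pauli k) := by
  have hU_eq : U = pauliSwap₁₂ * pauliSwap₂₃ := ext_of_mul_kronecker_kronecker fun a b c => by
    rw [hU, Matrix.mul_assoc, pauliSwap₂₃_mul_kronecker, pauliSwap₁₂_mul_kronecker]
  rw [hU_eq, pauliSwap₁₂_mul_pauliSwap₂₃, sum_pauli_kronecker_mul_kronecker_pauli]
  module
end

section
/- If U_{N₁⊗N₃} = Σ_{i,j} α^{ij} B_i ⊗ C_j as a linear combination with B_i ∈ ℂ^{N₃×N₁}, C_j ∈ ℂ^{N₁×N₃}, then for any N₂ the matrix Σ_{i,j} α^{ij} B_i ⊗ I_{N₂} ⊗ C_j sends b₁ ⊗ b₂ ⊗ b₃ to b₃ ⊗ b₂ ⊗ b₁ for all b₁ ∈ ℂ^{N₁×1}, b₂ ∈ ℂ^{N₂×1}, b₃ ∈ ℂ^{N₃×1}. -/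
open Matrix Kronecker

theorem tensor_commutation_middle_identity
    {N₁ N₂ N₃ : ℕ} {ι κ : Type*} [Fintype ι] [Fintype κ]
    (α : ι → κ → ℂ)
    (B : ι → Matrix (Fin N₃) (Fin N₁) ℂ) (C : κ → Matrix (Fin N₁) (Fin N₃) ℂ)
    (hU : ∀ (b₁ : Matrix (Fin N₁) (Fin 1) ℂ) (b₃ : Matrix (Fin N₃) (Fin 1) ℂ),
      (∑ i, ∑ j, α i j • (B i ⊗ₖ C j)) * (b₁ ⊗ₖ b₃) = b₃ ⊗ₖ b₁)
    (b₁ : Matrix (Fin N₁) (Fin 1) ℂ) (b₂ : Matrix (Fin N₂) (Fin 1) ℂ)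
    (b₃ : Matrix (Fin N₃) (Fin 1) ℂ) :
    (∑ i, ∑ j, α i j • (B i ⊗ₖ (1 : Matrix (Fin N₂) (Fin N₂) ℂ) ⊗ₖ C j))
        * (b₁ ⊗ₖ b₂ ⊗ₖ b₃) = b₃ ⊗ₖ b₂ ⊗ₖ b₁ := by
  have key : ∀ (p : Fin N₃) (r : Fin N₁),
      (∑ i, ∑ j, α i j * ((B i * b₁) p 0 * (C j * b₃) r 0)) = b₃ p 0 * b₁ r 0 := by
    intro p r
    have h := congrFun (congrFun (hU b₁ b₃) (p, r)) (0, 0)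
    simpa [Matrix.sum_mul, Matrix.smul_mul, ← Matrix.mul_kronecker_mul,
      Matrix.sum_apply, Matrix.kroneckerMap_apply] using h
  ext ⟨⟨p, q⟩, r⟩ s
  fin_cases s
  simp only [Matrix.sum_mul, Matrix.smul_mul, ← Matrix.mul_kronecker_mul, Matrix.one_mul,
    Matrix.sum_apply, Matrix.smul_apply, Matrix.kroneckerMap_apply, smul_eq_mul]
  calc (∑ i, ∑ j, α i j * ((B i * b₁) p 0 * b₂ q 0 * (C j * b₃) r 0))
      = (∑ i, ∑ j, α i j * ((B i * b₁) p 0 * (C j * b₃) r 0)) * b₂ q 0 := by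
        rw [Finset.sum_mul]
        refine Finset.sum_congr rfl fun i _ => ?_
        rw [Finset.sum_mul]
        exact Finset.sum_congr rfl fun j _ => by ring
    _ = b₃ p 0 * b₂ q 0 * b₁ r 0 := by rw [key]; ring
end

section
/- If A ⊗ B = Σ_{i=1}^{n} A_i ⊗ B_i with A, A_i ∈ ℂ^{p×r} and B, B_i ∈ ℂ^{l×m}, then for every matrix K, A ⊗ K ⊗ B = Σ_{i=1}^{n} A_i ⊗ K ⊗ B_i. -/
open Matrix Kronecker

theorem kronecker_insert_middle
    {p r l m q s : ℕ} {ι : Type*} [Fintype ι]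
    (A : Matrix (Fin p) (Fin r) ℂ) (B : Matrix (Fin l) (Fin m) ℂ)
    (A' : ι → Matrix (Fin p) (Fin r) ℂ) (B' : ι → Matrix (Fin l) (Fin m) ℂ)
    (h : A ⊗ₖ B = ∑ i, A' i ⊗ₖ B' i)
    (K : Matrix (Fin q) (Fin s) ℂ) :
    A ⊗ₖ K ⊗ₖ B = ∑ i, A' i ⊗ₖ K ⊗ₖ B' i := by
  have h' : ∀ i j k l', A i j * B k l' = ∑ x, A' x i j * B' x k l' := by
    intro i j k l'
    have := congrFun (congrFun h (i, k)) (j, l')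
    simpa [Matrix.sum_apply, kroneckerMap_apply] using this
  ext ⟨⟨a, b⟩, c⟩ ⟨⟨d, e⟩, f⟩
  simp only [Matrix.sum_apply, kroneckerMap_apply]
  calc A a d * K b e * B c f = (A a d * B c f) * K b e := by ring
    _ = (∑ x, A' x a d * B' x c f) * K b e := by rw [h']
    _ = ∑ x, A' x a d * K b e * B' x c f := by rw [Finset.sum_mul]; exact Finset.sum_congr rfl fun _ _ => by ring
end

section
/- Let A be a symmetric complex n×n matrix admitting an LU decomposition A = L·U where L is unit lower triangular and U is upper triangular with nonzero diagonal entries u₁₁,...,u_nn. Let G be the upper triangular matrix with rows G_i = U_i/√(u_ii) (each row of U divided by a square root of its diagonal entry). Then A = Gᵀ·G. -/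
open Matrix

theorem gauss_to_cholesky
    {n : ℕ}
    (A L U : Matrix (Fin n) (Fin n) ℂ)
    (hA : A.IsSymm)
    (hLU : A = L * U)
    (hLlow : ∀ i j : Fin n, i < j → L i j = 0)
    (hLdiag : ∀ i : Fin n, L i i = 1)
    (hUup : ∀ i j : Fin n, j < i → U i j = 0)
    (hUdiag : ∀ i : Fin n, U i i ≠ 0)
    (s : Fin n → ℂ)
    (hs : ∀ i : Fin n, s i ^ 2 = U i i)
    (G : Matrix (Fin n) (Fin n) ℂ)
    (hG : ∀ i j : Fin n, G i j = U i j / s i) :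
    A = Gᵀ * G := by
  classical
  -- L is invertible
  have hLtri : Lᵀ.BlockTriangular id := fun i j h => hLlow _ _ h
  have hdetL : L.det = 1 := by
    rw [← Matrix.det_transpose, Matrix.det_of_upperTriangular hLtri]
    simp [Matrix.transpose_apply, hLdiag]
  have hLunit : IsUnit L.det := by rw [hdetL]; exact isUnit_one
  haveI : Invertible L := L.invertibleOfIsUnitDet hLunit
  haveI : Invertible Lᵀ := L.transpose.invertibleOfIsUnitDet (by
    rw [Matrix.det_transpose, hdetL]; exact isUnit_one)
  have hUtri : U.BlockTriangular id := fun i j h => hUup _ _ h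
  -- M := U * (Lᵀ)⁻¹
  set M := U * (Lᵀ)⁻¹ with hMdef
  have hM2 : M = L⁻¹ * A * (Lᵀ)⁻¹ := by
    rw [hLU, ← Matrix.mul_assoc, Matrix.inv_mul_of_invertible, Matrix.one_mul]
  -- M is symmetric
  have hMsym : Mᵀ = M := by
    rw [hM2]
    rw [Matrix.transpose_mul, Matrix.transpose_mul, Matrix.transpose_nonsing_inv,
      Matrix.transpose_nonsing_inv, Matrix.transpose_transpose, hA, Matrix.mul_assoc]
  -- M is upper triangular
  have hMtri : M.BlockTriangular id :=
    hUtri.mul (blockTriangular_inv_of_blockTriangular (fun i j h => hLlow _ _ h))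
  -- M is diagonal
  have hMoff : ∀ i j : Fin n, i ≠ j → M i j = 0 := by
    intro i j hij
    rcases lt_or_gt_of_ne hij with h | h
    · rw [← hMsym, Matrix.transpose_apply]
      exact hMtri h
    · exact hMtri h
  -- M's diagonal is U's diagonal: from Uᵀ = L * M
  have key : Uᵀ * Lᵀ = L * U := by
    have h1 : Uᵀ * Lᵀ = (L * U)ᵀ := (Matrix.transpose_mul L U).symm
    rw [h1, ← hLU, hA.eq, hLU]
  have hUT : Uᵀ = L * M := by
    rw [hMdef, ← Matrix.mul_assoc, ← key, Matrix.mul_assoc,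
      Matrix.mul_inv_of_invertible, Matrix.mul_one]
  have hMdiag : ∀ i : Fin n, M i i = U i i := by
    intro i
    have := congrFun (congrFun hUT i) i
    rw [Matrix.transpose_apply, Matrix.mul_apply] at this
    rw [this, Finset.sum_eq_single i]
    · rw [hLdiag, one_mul]
    · intro k _ hk
      rw [hMoff k i hk, mul_zero]
    · intro h; exact absurd (Finset.mem_univ i) h
  -- M = diagonal of U's diagonal
  have hM : M = Matrix.diagonal (fun i => U i i) := by
    ext i j
    by_cases h : i = j
    · subst h; rw [hMdiag]; simp
    · rw [hMoff i j h, Matrix.diagonal_apply_ne _ h]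
  -- A = Uᵀ * D⁻¹ * U where D⁻¹ handled entrywise; use A = L*U, L = Uᵀ * M⁻¹ ... simpler:
  -- From hUT : Uᵀ = L * M, so L = Uᵀ * M⁻¹; instead compute entrywise.
  have hsne : ∀ i : Fin n, s i ≠ 0 := by
    intro i hsi
    apply hUdiag i
    rw [← hs i, hsi]; ring
  -- A = Uᵀ * (diagonal (fun i => (U i i)⁻¹) * U)
  have hL : L = Uᵀ * Matrix.diagonal (fun i => (U i i)⁻¹) := by
    rw [hUT, hM, Matrix.mul_assoc, Matrix.diagonal_mul_diagonal]
    have : (fun i => U i i * (U i i)⁻¹) = fun _ => (1 : ℂ) := by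
      funext i; exact mul_inv_cancel₀ (hUdiag i)
    rw [this, Matrix.diagonal_one, Matrix.mul_one]
  rw [hLU, hL, Matrix.mul_assoc]
  ext i j
  rw [Matrix.mul_apply, Matrix.mul_apply]
  apply Finset.sum_congr rfl
  intro k _
  rw [Matrix.transpose_apply, Matrix.transpose_apply, Matrix.mul_apply,
    Finset.sum_eq_single k (fun b _ hb => by
      rw [Matrix.diagonal_apply_ne _ (Ne.symm hb), zero_mul])
    (fun h => absurd (Finset.mem_univ k) h),
    Matrix.diagonal_apply_eq, hG, hG]
  field_simp
  rw [← hs k]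
end
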